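/- arXiv:1206.6354 — 4 statements merged into one kernel-verified Lean document; each statement's English description precedes it below -/
import Mathlib

section
/- For every integer m ≥ 1 and every integer ℓ ≥ 0, the number of barred preferential arrangements satisfies 2·m·r_{m,ℓ} = r_{m-1, ℓ+1} + m·r_{m-1, ℓ}. -/
/-- `IsBPA m ℓ f` : `f` encodes a barred preferential arrangement of `[ℓ]` with `m` bars.
Each element of `[ℓ]` is assigned a section (one of the `m + 1` sections determined by the
`m` bars) together with a rank inside its section (ties are allowed: elements of the same
section with the same rank form a block); within each section the set of ranks actually used
must be an initial segment `{0, …, t-1}`, so that `f` determines, for each section, an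
ordered partition of the elements assigned to it into nonempty blocks. -/
def IsBPA (m ℓ : ℕ) (f : Fin ℓ → Fin (m + 1) × Fin ℓ) : Prop :=
  ∀ x : Fin ℓ, ∀ r : Fin ℓ, r < (f x).2 → ∃ y : Fin ℓ, (f y).1 = (f x).1 ∧ (f y).2 = r

instance (m ℓ : ℕ) : DecidablePred (IsBPA m ℓ) := fun f => by unfold IsBPA; infer_instance

/-- `bpa m ℓ` : the number of barred preferential arrangements of `[ℓ]` with `m` bars.
In particular `bpa 0 ℓ` is the number of preferential arrangements of `[ℓ]`
(the Fubini / ordered Bell number `r_ℓ`). -/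
def bpa (m ℓ : ℕ) : ℕ :=
  Fintype.card { f : Fin ℓ → Fin (m + 1) × Fin ℓ // IsBPA m ℓ f }

/-!
Ranks may be taken in all of `ℕ` (they are automatically below the number of elements), which
makes arrangements of any finite type into any finite type of sections meaningful and invariant
under bijections of both. Splitting off the last section gives
`r_{m+1,ℓ} = ∑ C(ℓ,j) r_{m,j} r_{ℓ-j}`, so the exponential generating function of `r_{m,·}` is
`F^(m+1)`, where `F = ∑ r_ℓ x^ℓ/ℓ!`. Splitting off the first block of a preferential arrangement
gives `F (2 - eˣ) = 1`, hence `F' = F (2F - 1)` and `(F^m)' = 2m F^(m+1) - m F^m`; comparing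
coefficients is the recurrence.
-/
open Finset

section Arrangement

variable {α β σ τ : Type*}

def IsArrangement (f : α → σ × ℕ) : Prop :=
  ∀ x, ∀ r < (f x).2, ∃ y, f y = ((f x).1, r)

abbrev Arrangement (α σ : Type*) := {f : α → σ × ℕ // IsArrangement f}

theorem IsArrangement.rank_lt_card [Fintype α] {f : α → σ × ℕ} (hf : IsArrangement f) (x : α) :
    (f x).2 < Fintype.card α := by
  classical
  have hranks : range ((f x).2 + 1) ⊆ univ.image fun y => (f y).2 := by
    intro r hr
    rcases (Nat.lt_succ_iff.mp (mem_range.mp hr)).lt_or_eq with hr | rfl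
    · obtain ⟨y, hy⟩ := hf x r hr
      exact mem_image.mpr ⟨y, mem_univ y, by simp [hy]⟩
    · exact mem_image_of_mem _ (mem_univ x)
  simpa using (card_le_card hranks).trans card_image_le

theorem isArrangement_unit_iff {f : α → Unit × ℕ} :
    IsArrangement f ↔ ∀ x, ∀ r < (f x).2, ∃ y, (f y).2 = r := by
  simp [IsArrangement, Prod.ext_iff]

instance [Finite α] [Finite σ] : Finite (Arrangement α σ) := by
  cases nonempty_fintype α
  refine Finite.of_injective
    (fun f : Arrangement α σ => fun x => ((f.1 x).1, (⟨(f.1 x).2, f.2.rank_lt_card x⟩ : Fin _)))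
    fun f g hfg => Subtype.ext <| funext fun x => ?_
  simpa [Prod.ext_iff, Fin.ext_iff] using congrFun hfg x

theorem isArrangement_congr_iff (e : α ≃ β) (e' : σ ≃ τ) (f : α → σ × ℕ) :
    IsArrangement (Prod.map e' id ∘ f ∘ e.symm) ↔ IsArrangement f := by
  constructor
  · intro hf x r hr
    obtain ⟨y, hy⟩ := hf (e x) r (by simpa using hr)
    refine ⟨e.symm y, ?_⟩
    simpa [Prod.ext_iff] using hy
  · intro hf x r hr
    obtain ⟨y, hy⟩ := hf (e.symm x) r (by simpa using hr)
    exact ⟨e y, by simp [hy]⟩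

def Arrangement.congr (e : α ≃ β) (e' : σ ≃ τ) : Arrangement α σ ≃ Arrangement β τ :=
  (e.arrowCongr (e'.prodCongr (Equiv.refl ℕ))).subtypeEquiv fun f =>
    (isArrangement_congr_iff e e' f).symm

def bpaEquivArrangement (m ℓ : ℕ) :
    {f : Fin ℓ → Fin (m + 1) × Fin ℓ // IsBPA m ℓ f} ≃ Arrangement (Fin ℓ) (Fin (m + 1)) where
  toFun f := ⟨fun x => ((f.1 x).1, (f.1 x).2), fun x r hr => by
    obtain ⟨y, hy₁, hy₂⟩ := f.2 x ⟨r, hr.trans (f.1 x).2.isLt⟩ hr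
    exact ⟨y, by simp [hy₁, hy₂]⟩⟩
  invFun g := ⟨fun x => ((g.1 x).1, ⟨(g.1 x).2, by simpa using g.2.rank_lt_card x⟩),
    fun x r hr => by
      obtain ⟨y, hy⟩ := g.2 x r hr
      exact ⟨y, by simp [hy]⟩⟩
  left_inv f := rfl
  right_inv g := rfl

theorem card_arrangement_eq_bpa [Fintype α] [Fintype σ] {m : ℕ} (hσ : Fintype.card σ = m + 1) :
    Nat.card (Arrangement α σ) = bpa m (Fintype.card α) := by
  rw [bpa, ← Nat.card_eq_fintype_card, Nat.card_congr (bpaEquivArrangement _ _)]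
  exact Nat.card_congr (Arrangement.congr (Fintype.equivFin α)
    (Fintype.equivFinOfCardEq hσ))

end Arrangement

section SumDecomposition

variable {α σ τ : Type*} [DecidableEq α]

def sumGlue (s : Σ A : Finset α, Arrangement A σ × Arrangement {x // x ∉ A} τ) :
    α → (σ ⊕ τ) × ℕ := fun x =>
  if hx : x ∈ s.1 then Prod.map Sum.inl id (s.2.1.1 ⟨x, hx⟩)
  else Prod.map Sum.inr id (s.2.2.1 ⟨x, hx⟩)

theorem isArrangement_sumGlue (s : Σ A : Finset α, Arrangement A σ × Arrangement {x // x ∉ A} τ) :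
    IsArrangement (sumGlue s) := by
  obtain ⟨A, ⟨g, hg⟩, ⟨h, hh⟩⟩ := s
  intro x r hr
  by_cases hx : x ∈ A
  · simp only [sumGlue, dif_pos hx] at hr ⊢
    obtain ⟨y, hy⟩ := hg ⟨x, hx⟩ r hr
    exact ⟨y, by simp [hy]⟩
  · simp only [sumGlue, dif_neg hx] at hr ⊢
    obtain ⟨y, hy⟩ := hh ⟨x, hx⟩ r hr
    exact ⟨y, by simp [y.2, hy]⟩

theorem sumGlue_injective : Function.Injective (sumGlue (α := α) (σ := σ) (τ := τ)) := by
  rintro ⟨A, ⟨g, hg⟩, ⟨h, hh⟩⟩ ⟨A', ⟨g', hg'⟩, ⟨h', hh'⟩⟩ heq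
  have hmem : ∀ {B : Finset α} (s : Arrangement B σ × Arrangement {x // x ∉ B} τ) x,
      x ∈ B ↔ (sumGlue ⟨B, s⟩ x).1.isLeft := by
    intro B s x
    by_cases hx : x ∈ B <;> simp [sumGlue, hx]
  obtain rfl : A = A' := by
    ext x
    rw [hmem _ x, hmem _ x, heq]
  obtain rfl : g = g' := by
    funext ⟨x, hx⟩
    simpa [sumGlue, hx, Prod.ext_iff] using congrFun heq x
  obtain rfl : h = h' := by
    funext ⟨x, hx⟩
    simpa [sumGlue, hx, Prod.ext_iff] using congrFun heq x
  rfl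

theorem exists_sumGlue_eq [Fintype α] {f : α → (σ ⊕ τ) × ℕ} (hf : IsArrangement f) :
    ∃ s, sumGlue s = f := by
  set A := univ.filter fun x => (f x).1.isLeft
  have hA : ∀ x, x ∈ A ↔ (f x).1.isLeft := by simp [A]
  refine ⟨⟨A, ⟨fun x => ((f x).1.getLeft ((hA x).1 x.2), (f x).2), fun x r hr => ?_⟩,
    ⟨fun x => ((f x).1.getRight (by simpa using (hA x).not.1 x.2), (f x).2),
      fun x r hr => ?_⟩⟩, ?_⟩
  · obtain ⟨y, hy⟩ := hf x r hr
    refine ⟨⟨y, (hA y).2 (by simp [hy, (hA x).1 x.2])⟩, ?_⟩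
    simp [hy]
  · obtain ⟨y, hy⟩ := hf x r hr
    refine ⟨⟨y, (hA y).not.2 (by simpa [hy] using (hA x).not.1 x.2)⟩, ?_⟩
    simp [hy]
  · funext x
    by_cases hx : x ∈ A <;> simp [sumGlue, hx]

noncomputable def Arrangement.sumEquiv [Fintype α] :
    (Σ A : Finset α, Arrangement A σ × Arrangement {x // x ∉ A} τ) ≃ Arrangement α (σ ⊕ τ) :=
  Equiv.ofBijective (fun s => ⟨sumGlue s, isArrangement_sumGlue s⟩)
    ⟨fun _ _ h => sumGlue_injective (congrArg Subtype.val h),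
      fun f => (exists_sumGlue_eq f.2).imp fun _ hs => Subtype.ext hs⟩

theorem card_arrangement_sum [Fintype α] [Finite σ] [Finite τ] :
    Nat.card (Arrangement α (σ ⊕ τ)) =
      ∑ A : Finset α, Nat.card (Arrangement A σ) * Nat.card (Arrangement {x // x ∉ A} τ) := by
  simp only [← Nat.card_congr Arrangement.sumEquiv, Nat.card_sigma, Nat.card_prod]

end SumDecomposition

section FirstBlock

variable {α : Type*} [DecidableEq α]

def firstBlockGlue (s : Σ B : {B : Finset α // B.Nonempty}, Arrangement {x // x ∉ B.1} Unit) :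
    α → Unit × ℕ := fun x =>
  if hx : x ∈ s.1.1 then ((), 0) else ((), (s.2.1 ⟨x, hx⟩).2 + 1)

theorem isArrangement_firstBlockGlue
    (s : Σ B : {B : Finset α // B.Nonempty}, Arrangement {x // x ∉ B.1} Unit) :
    IsArrangement (firstBlockGlue s) := by
  obtain ⟨⟨B, ⟨b, hb⟩⟩, ⟨h, hh⟩⟩ := s
  rw [isArrangement_unit_iff] at hh ⊢
  intro x r hr
  by_cases hx : x ∈ B
  · simp [firstBlockGlue, hx] at hr
  · simp only [firstBlockGlue, dif_neg hx] at hr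
    rcases r with _ | r
    · exact ⟨b, by simp [firstBlockGlue, hb]⟩
    · obtain ⟨y, hy⟩ := hh ⟨x, hx⟩ r (by omega)
      exact ⟨y, by simp [firstBlockGlue, y.2, hy]⟩

theorem firstBlockGlue_injective : Function.Injective (firstBlockGlue (α := α)) := by
  rintro ⟨⟨B, hB⟩, ⟨h, hh⟩⟩ ⟨⟨B', hB'⟩, ⟨h', hh'⟩⟩ heq
  have hmem : ∀ {C : {C : Finset α // C.Nonempty}} (s : Arrangement {x // x ∉ C.1} Unit) x,
      x ∈ C.1 ↔ (firstBlockGlue ⟨C, s⟩ x).2 = 0 := by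
    intro C s x
    by_cases hx : x ∈ C.1 <;> simp [firstBlockGlue, hx]
  obtain rfl : B = B' := by
    ext x
    rw [hmem (C := ⟨B, hB⟩) _ x, hmem (C := ⟨B', hB'⟩) _ x, heq]
  obtain rfl : h = h' := by
    funext ⟨x, hx⟩
    simpa [firstBlockGlue, hx, Prod.ext_iff] using congrFun heq x
  rfl

theorem exists_firstBlockGlue_eq [Fintype α] [Nonempty α] {f : α → Unit × ℕ}
    (hf : IsArrangement f) : ∃ s, firstBlockGlue s = f := by
  rw [isArrangement_unit_iff] at hf
  set B := univ.filter fun x => (f x).2 = 0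
  have hB : ∀ x, x ∈ B ↔ (f x).2 = 0 := by simp [B]
  have hBne : B.Nonempty := by
    obtain ⟨x⟩ := ‹Nonempty α›
    obtain h0 | hpos := Nat.eq_zero_or_pos (f x).2
    · exact ⟨x, (hB x).2 h0⟩
    · obtain ⟨y, hy⟩ := hf x 0 hpos
      exact ⟨y, (hB y).2 hy⟩
  refine ⟨⟨⟨B, hBne⟩, ⟨fun x => ((), (f x).2 - 1), ?_⟩⟩, ?_⟩
  · rw [isArrangement_unit_iff]
    intro x r hr
    have hx := (hB x).not.1 x.2
    obtain ⟨y, hy⟩ := hf x (r + 1) (by simp at hr; omega)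
    exact ⟨⟨y, by simp [hB, hy]⟩, by simp [hy]⟩
  · funext x
    refine Prod.ext rfl ?_
    by_cases hx : x ∈ B
    · simp [firstBlockGlue, hx, (hB x).1 hx]
    · have := (hB x).not.1 hx
      simp [firstBlockGlue, hx]
      omega

noncomputable def Arrangement.firstBlockEquiv [Fintype α] [Nonempty α] :
    (Σ B : {B : Finset α // B.Nonempty}, Arrangement {x // x ∉ B.1} Unit) ≃
      Arrangement α Unit :=
  Equiv.ofBijective (fun s => ⟨firstBlockGlue s, isArrangement_firstBlockGlue s⟩)
    ⟨fun _ _ h => firstBlockGlue_injective (congrArg Subtype.val h),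
      fun f => (exists_firstBlockGlue_eq f.2).imp fun _ hs => Subtype.ext hs⟩

theorem card_arrangement_unit [Fintype α] [Nonempty α] :
    Nat.card (Arrangement α Unit) =
      ∑ B ∈ (univ : Finset (Finset α)).filter Finset.Nonempty,
        Nat.card (Arrangement {x // x ∉ B} Unit) := by
  rw [← Nat.card_congr Arrangement.firstBlockEquiv, Nat.card_sigma]
  exact (sum_subtype _ (fun B => mem_filter_univ B)
    fun B => Nat.card (Arrangement {x // x ∉ B} Unit)).symm

end FirstBlock

theorem bpa_succ (m ℓ : ℕ) :
    bpa (m + 1) ℓ = ∑ j ∈ range (ℓ + 1), ℓ.choose j * (bpa m j * bpa 0 (ℓ - j)) := by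
  calc bpa (m + 1) ℓ = Nat.card (Arrangement (Fin ℓ) (Fin (m + 1) ⊕ Fin 1)) := by
        rw [card_arrangement_eq_bpa (m := m + 1) (by simp), Fintype.card_fin]
    _ = ∑ A : Finset (Fin ℓ), bpa m A.card * bpa 0 (ℓ - A.card) := by
        rw [card_arrangement_sum]
        refine sum_congr rfl fun A _ => ?_
        rw [card_arrangement_eq_bpa (m := m) (by simp), card_arrangement_eq_bpa (m := 0) (by simp)]
        simp [Fintype.card_subtype_compl]
    _ = _ := by
        rw [← powerset_univ, sum_powerset_apply_card (fun j => bpa m j * bpa 0 (ℓ - j))]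
        simp

theorem bpa_zero_zero : bpa 0 0 = 1 := by decide

theorem two_mul_bpa_zero_of_pos {n : ℕ} (hn : 0 < n) :
    2 * bpa 0 n = ∑ j ∈ range (n + 1), n.choose j * bpa 0 (n - j) := by
  have : Nonempty (Fin n) := ⟨⟨0, hn⟩⟩
  have hfirst : bpa 0 n = ∑ B ∈ univ.erase ∅, bpa 0 (n - (B : Finset (Fin n)).card) := by
    have h := card_arrangement_eq_bpa (α := Fin n) (m := 0) Fintype.card_unit
    rw [Fintype.card_fin] at h
    rw [← h, card_arrangement_unit]
    refine sum_congr (by ext B; simp [nonempty_iff_ne_empty]) fun B _ => ?_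
    rw [card_arrangement_eq_bpa (m := 0) Fintype.card_unit]
    simp [Fintype.card_subtype_compl]
  calc 2 * bpa 0 n = bpa 0 (n - (∅ : Finset (Fin n)).card) +
        ∑ B ∈ (univ : Finset (Finset (Fin n))).erase ∅, bpa 0 (n - B.card) := by
        rw [← hfirst, card_empty, Nat.sub_zero, two_mul]
    _ = ∑ B : Finset (Fin n), bpa 0 (n - B.card) :=
        add_sum_erase _ (fun B : Finset (Fin n) => bpa 0 (n - B.card)) (mem_univ _)
    _ = _ := by
        rw [← powerset_univ, sum_powerset_apply_card (fun j => bpa 0 (n - j))]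
        simp

theorem two_mul_bpa_zero (n : ℕ) :
    2 * bpa 0 n = ∑ j ∈ range (n + 1), n.choose j * bpa 0 (n - j) + if n = 0 then 1 else 0 := by
  rcases Nat.eq_zero_or_pos n with rfl | hn
  · simp [bpa_zero_zero]
  · simp [two_mul_bpa_zero_of_pos hn, hn.ne']

section GeneratingFunction

open PowerSeries Nat

noncomputable def egf (a : ℕ → ℕ) : ℚ⟦X⟧ := PowerSeries.mk fun n => (a n : ℚ) / n !

theorem coeff_egf (a : ℕ → ℕ) (n : ℕ) : coeff n (egf a) = a n / n ! := coeff_mk _ _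

theorem egf_injective : Function.Injective egf := by
  intro a b h
  funext n
  have := congrArg (coeff n) h
  rwa [coeff_egf, coeff_egf, div_left_inj' (by positivity), Nat.cast_inj] at this

theorem egf_add (a b : ℕ → ℕ) : egf (fun n => a n + b n) = egf a + egf b := by
  ext n
  simp [coeff_egf, add_div]

theorem egf_natCast_mul (c : ℕ) (a : ℕ → ℕ) : egf (fun n => c * a n) = c * egf a := by
  ext n
  rw [← map_natCast (C (R := ℚ)), coeff_C_mul, coeff_egf, coeff_egf]
  push_cast
  ring

theorem egf_mul (a b : ℕ → ℕ) :
    egf a * egf b = egf fun n => ∑ j ∈ range (n + 1), n.choose j * (a j * b (n - j)) := by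
  ext n
  rw [coeff_mul, Finset.Nat.sum_antidiagonal_eq_sum_range_succ_mk, coeff_egf, Nat.cast_sum,
    sum_div]
  refine sum_congr rfl fun j hj => ?_
  have hj : j ≤ n := Nat.lt_succ_iff.mp (mem_range.mp hj)
  dsimp only
  rw [coeff_egf, coeff_egf, Nat.cast_mul, Nat.cast_choose ℚ hj]
  push_cast
  field_simp

theorem derivative_egf (a : ℕ → ℕ) : d⁄dX ℚ (egf a) = egf fun n => a (n + 1) := by
  ext n
  rw [coeff_derivative, coeff_egf, coeff_egf, factorial_succ]
  push_cast
  field_simp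

theorem egf_one : egf (fun _ => 1) = exp ℚ := by
  ext n
  simp [coeff_egf]

theorem egf_ite_zero_one : egf (fun n => if n = 0 then 1 else 0) = 1 := by
  ext n
  rcases n with _ | n <;> simp [coeff_egf, coeff_one]

theorem derivative_eq_of_mul_two_sub_exp {F : ℚ⟦X⟧} (hF : F * (2 - exp ℚ) = 1) :
    d⁄dX ℚ F = F * (2 * F - 1) := by
  have hd := congrArg (d⁄dX ℚ) hF
  rw [Derivation.leibniz, map_sub, derivative_exp, Derivation.map_one_eq_zero] at hd
  have h2 : d⁄dX ℚ (2 : ℚ⟦X⟧) = 0 := by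
    rw [← map_ofNat (C (R := ℚ)), derivative_C]
  rw [h2, smul_eq_mul, smul_eq_mul] at hd
  -- F' = F' · F (2 - eˣ) = F · F eˣ, and F eˣ = 2F - 1
  linear_combination (-d⁄dX ℚ F - F) * hF + F * hd

theorem derivative_pow_eq_of_mul_two_sub_exp {F : ℚ⟦X⟧} (hF : F * (2 - exp ℚ) = 1) (k : ℕ) :
    d⁄dX ℚ (F ^ (k + 1)) = (k + 1) * F ^ (k + 1) * (2 * F - 1) := by
  rw [Derivation.leibniz_pow, derivative_eq_of_mul_two_sub_exp hF, nsmul_eq_mul, smul_eq_mul,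
    Nat.add_sub_cancel]
  push_cast
  ring

theorem egf_bpa_zero_mul_two_sub_exp : egf (bpa 0) * (2 - exp ℚ) = 1 := by
  have h : egf (fun n => 2 * bpa 0 n) =
      egf (fun n => ∑ j ∈ range (n + 1), n.choose j * (1 * bpa 0 (n - j))) + 1 := by
    rw [← egf_ite_zero_one, ← egf_add]
    simp only [one_mul]
    exact congrArg egf (funext two_mul_bpa_zero)
  rw [egf_natCast_mul, ← egf_mul, egf_one] at h
  push_cast at h
  linear_combination h

theorem egf_bpa (m : ℕ) : egf (bpa m) = egf (bpa 0) ^ (m + 1) := by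
  induction m with
  | zero => rw [zero_add, pow_one]
  | succ m ih => rw [funext (bpa_succ m), ← egf_mul, ih, ← pow_succ]

theorem egf_two_mul_bpa_succ (k : ℕ) :
    egf (fun ℓ => 2 * (k + 1) * bpa (k + 1) ℓ) =
      egf (fun ℓ => bpa k (ℓ + 1) + (k + 1) * bpa k ℓ) := by
  rw [egf_add, ← derivative_egf, egf_natCast_mul, egf_natCast_mul, egf_bpa (k + 1), egf_bpa k,
    derivative_pow_eq_of_mul_two_sub_exp egf_bpa_zero_mul_two_sub_exp]
  push_cast
  ring

end GeneratingFunction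

/-- For every `m ≥ 1` and every `ℓ ≥ 0`,
`2 · m · r_{m,ℓ} = r_{m-1, ℓ+1} + m · r_{m-1, ℓ}`. -/
theorem bpa_recurrence (m ℓ : ℕ) (hm : 1 ≤ m) :
    2 * m * bpa m ℓ = bpa (m - 1) (ℓ + 1) + m * bpa (m - 1) ℓ := by
  obtain ⟨k, rfl⟩ := Nat.exists_eq_add_of_le' hm
  exact congrFun (egf_injective (egf_two_mul_bpa_succ k)) ℓ
end

section
/- For every integer m ≥ 0 and every integer ℓ ≥ 0, 2^m · m! · r_{m,ℓ} = ∑_{i=0}^{m} c(m+1, i+1) · r_{ℓ+i}, where c(n,k) is the unsigned Stirling number of the first kind. -/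
/-- The unsigned Stirling numbers of the first kind, `c(n, k)`: the number of permutations
of `n` elements having `k` cycles. -/
def stirling1 : ℕ → ℕ → ℕ
  | 0, 0 => 1
  | 0, _ + 1 => 0
  | _ + 1, 0 => 0
  | n + 1, k + 1 => n * stirling1 n (k + 1) + stirling1 n k

open Finset

namespace BarredArrangement

variable {α β : Type*}

-- `g x = (s, k)` puts `x` into block `k` of section `s`; the blocks of each section are
-- numbered `0, 1, …` without gaps.
def IsPrefArrangement (g : α → ℕ × ℕ) : Prop :=
  ∀ x, ∀ q < (g x).2, ∃ y, g y = ((g x).1, q)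

lemma IsPrefArrangement.comp {g : α → ℕ × ℕ} (hg : IsPrefArrangement g) {e : β → α}
    (he : Function.Surjective e) : IsPrefArrangement (g ∘ e) := by
  intro x q hq
  obtain ⟨y, hy⟩ := hg (e x) q hq
  obtain ⟨y, rfl⟩ := he y
  exact ⟨y, hy⟩

lemma IsPrefArrangement.map_fst {g : α → ℕ × ℕ} (hg : IsPrefArrangement g) (φ : ℕ → ℕ) :
    IsPrefArrangement (Prod.map φ id ∘ g) := by
  intro x q hq
  obtain ⟨y, hy⟩ := hg x q hq
  exact ⟨y, by simp [hy]⟩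

end BarredArrangement

abbrev BarredArrangement (m : ℕ) (α : Type*) : Type _ :=
  {g : α → ℕ × ℕ // BarredArrangement.IsPrefArrangement g ∧ ∀ x, (g x).1 ≤ m}

namespace BarredArrangement

variable {α β : Type*} {m : ℕ}

def congr (e : α ≃ β) : BarredArrangement m α ≃ BarredArrangement m β where
  toFun g := ⟨g.1 ∘ e.symm, g.2.1.comp e.symm.surjective, fun _ => g.2.2 _⟩
  invFun g := ⟨g.1 ∘ e, g.2.1.comp e.surjective, fun _ => g.2.2 _⟩
  left_inv g := Subtype.ext <| funext fun x => by simp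
  right_inv g := Subtype.ext <| funext fun x => by simp

section Fintype

variable [Fintype α]

def numBlocks (g : α → ℕ × ℕ) (s : ℕ) : ℕ :=
  (univ.filter fun x => (g x).1 = s).sup fun x => (g x).2 + 1

lemma rank_lt_numBlocks (g : α → ℕ × ℕ) (x : α) : (g x).2 < numBlocks g (g x).1 :=
  Finset.lt_sup_iff.2 ⟨x, by simp, Nat.lt_succ_self _⟩

lemma numBlocks_pos_iff {g : α → ℕ × ℕ} {s : ℕ} : 0 < numBlocks g s ↔ ∃ x, (g x).1 = s := by
  simp [numBlocks, Finset.lt_sup_iff]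

lemma IsPrefArrangement.lt_numBlocks_iff {g : α → ℕ × ℕ} (hg : IsPrefArrangement g) {s q : ℕ} :
    q < numBlocks g s ↔ ∃ y, g y = (s, q) := by
  constructor
  · intro hq
    obtain ⟨x, hx, hqx⟩ := Finset.lt_sup_iff.1 hq
    rw [mem_filter] at hx
    obtain hlt | rfl := (Nat.lt_succ_iff.1 hqx).lt_or_eq
    · obtain ⟨y, hy⟩ := hg x q hlt
      exact ⟨y, by rw [hy, hx.2]⟩
    · exact ⟨x, Prod.ext hx.2 rfl⟩
  · rintro ⟨y, hy⟩
    simpa [hy] using rank_lt_numBlocks g y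

lemma IsPrefArrangement.rank_lt_card {g : α → ℕ × ℕ} (hg : IsPrefArrangement g) (x : α) :
    (g x).2 < Fintype.card α := by
  have hsub : range ((g x).2 + 1) ⊆ univ.image fun y => (g y).2 := by
    intro q hq
    obtain ⟨y, hy⟩ := hg.lt_numBlocks_iff.1
      ((Nat.lt_succ_iff.1 (mem_range.1 hq)).trans_lt (rank_lt_numBlocks g x))
    exact mem_image.2 ⟨y, mem_univ _, by simp [hy]⟩
  simpa using (card_le_card hsub).trans card_image_le

end Fintype

def equivIsBPA (m ℓ : ℕ) :
    BarredArrangement m (Fin ℓ) ≃ {f : Fin ℓ → Fin (m + 1) × Fin ℓ // IsBPA m ℓ f} where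
  toFun g := ⟨fun x => (⟨(g.1 x).1, Nat.lt_succ_of_le (g.2.2 x)⟩,
      ⟨(g.1 x).2, by simpa using g.2.1.rank_lt_card x⟩), fun x r hr => by
    obtain ⟨y, hy⟩ := g.2.1 x r hr
    exact ⟨y, Fin.ext (congrArg Prod.fst hy :), Fin.ext (congrArg Prod.snd hy :)⟩⟩
  invFun f := ⟨fun x => ((f.1 x).1, (f.1 x).2), fun x q hq => by
    obtain ⟨y, hy₁, hy₂⟩ := f.2 x ⟨q, hq.trans (f.1 x).2.2⟩ hq
    exact ⟨y, Prod.ext (congrArg Fin.val hy₁) (congrArg Fin.val hy₂)⟩,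
    fun x => Nat.le_of_lt_succ (f.1 x).1.2⟩
  left_inv g := rfl
  right_inv f := rfl

instance [Finite α] : Finite (BarredArrangement m α) := by
  obtain ⟨n, ⟨e⟩⟩ := Finite.exists_equiv_fin α
  exact Finite.of_equiv _ ((congr e).trans (equivIsBPA m n)).symm

-- Removing the bar after section `j`: section `j + 1` is appended to section `j` after its
-- first `r + 1` blocks, block `r` being reserved for the new element.
def mergeSections (j r : ℕ) (p : ℕ × ℕ) : ℕ × ℕ :=
  if p.1 ≤ j then p else if p.1 = j + 1 then (j, p.2 + (r + 1)) else (p.1 - 1, p.2)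

def splitSection (s r : ℕ) (p : ℕ × ℕ) : ℕ × ℕ :=
  if p.1 < s then p
  else if p.1 = s then (if p.2 ≤ r then p else (s + 1, p.2 - (r + 1)))
  else (p.1 + 1, p.2)

lemma splitSection_mergeSections {j r : ℕ} {p : ℕ × ℕ} (hp : p.1 = j → p.2 ≤ r) :
    splitSection j r (mergeSections j r p) = p := by
  unfold mergeSections splitSection
  split_ifs <;> grind

lemma mergeSections_splitSection (s r : ℕ) (p : ℕ × ℕ) :
    mergeSections s r (splitSection s r p) = p := by
  unfold mergeSections splitSection
  split_ifs <;> grind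

lemma splitSection_eq_iff {s r q : ℕ} {p : ℕ × ℕ} :
    splitSection s r p = (s, q) ↔ p = (s, q) ∧ q ≤ r := by
  unfold splitSection
  split_ifs <;> grind

lemma mergeSections_eq_iff {j r q : ℕ} {p : ℕ × ℕ} :
    mergeSections j r p = (j, q) ↔ p = (j, q) ∨ p = (j + 1, q - (r + 1)) ∧ r < q := by
  unfold mergeSections
  split_ifs <;> grind

def merge (g : α → ℕ × ℕ) (j r : ℕ) : Option α → ℕ × ℕ
  | none => (j, r)
  | some x => mergeSections j r (g x)

def split (g : Option α → ℕ × ℕ) (x : α) : ℕ × ℕ :=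
  splitSection (g none).1 (g none).2 (g (some x))

def SharesBlock (g : Option α → ℕ × ℕ) : Prop :=
  ∃ x, g (some x) = g none

lemma isPrefArrangement_split {g : Option α → ℕ × ℕ} (hg : IsPrefArrangement g) :
    IsPrefArrangement (split g) := by
  have hsome : ∀ o p, g o = p → p ≠ g none → ∃ y, g (some y) = p := by
    rintro (_ | y) p hy hp
    · exact absurd hy.symm hp
    · exact ⟨y, hy⟩
  intro x q hq
  simp only [split, splitSection] at hq ⊢
  split_ifs at hq ⊢ with h₁ h₂
  · obtain ⟨o, ho⟩ := hg (some x) q hq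
    obtain ⟨y, hy⟩ := hsome o _ ho (by grind)
    exact ⟨y, by simp [hy, h₁]⟩
  · obtain ⟨o, ho⟩ := hg (some x) q hq
    obtain ⟨y, hy⟩ := hsome o _ ho (by grind)
    exact ⟨y, by grind⟩
  · obtain ⟨o, ho⟩ := hg (some x) (q + (g none).2 + 1) (by simp only at hq; omega)
    obtain ⟨y, hy⟩ := hsome o _ ho (by grind)
    exact ⟨y, by simp [hy, h₂]⟩
  · obtain ⟨o, ho⟩ := hg (some x) q hq
    obtain ⟨y, hy⟩ := hsome o _ ho (by grind)
    exact ⟨y, by simp [hy, h₁, h₂]⟩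

lemma merge_split (g : Option α → ℕ × ℕ) : merge (split g) (g none).1 (g none).2 = g := by
  funext o
  cases o with
  | none => rfl
  | some x => exact mergeSections_splitSection _ _ _

lemma merge_fst_le {g : α → ℕ × ℕ} (hg : ∀ x, (g x).1 ≤ m + 1) {j : ℕ} (hj : j ≤ m) (r : ℕ) :
    ∀ o, (merge g j r o).1 ≤ m
  | none => hj
  | some x => by
    have := hg x
    simp only [merge, mergeSections, apply_ite Prod.fst]
    split_ifs <;> omega

lemma split_fst_le {g : Option α → ℕ × ℕ} (hg : ∀ o, (g o).1 ≤ m) (x : α) :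
    (split g x).1 ≤ m + 1 := by
  have := hg (some x)
  have := hg none
  simp only [split, splitSection, apply_ite Prod.fst]
  split_ifs <;> omega

def splitLast (g : BarredArrangement m (Option α)) : Fin (m + 1) × BarredArrangement (m + 1) α :=
  (⟨(g.1 none).1, Nat.lt_succ_of_le (g.2.2 none)⟩,
    ⟨split g.1, isPrefArrangement_split g.2.1, split_fst_le g.2.2⟩)

def liftSection (j s : ℕ) : ℕ := if s < j then s else s + 1

def squashSection (j s : ℕ) : ℕ := if s < j then s else s - 1

lemma squashSection_liftSection (j s : ℕ) : squashSection j (liftSection j s) = s := by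
  unfold squashSection liftSection
  split_ifs <;> omega

lemma liftSection_squashSection {j s : ℕ} (h : s ≠ j) : liftSection j (squashSection j s) = s := by
  unfold squashSection liftSection
  split_ifs <;> omega

section Fintype

variable [Fintype α]

lemma isPrefArrangement_merge {g : α → ℕ × ℕ} (hg : IsPrefArrangement g) {j r : ℕ}
    (hr : r ≤ numBlocks g j) : IsPrefArrangement (merge g j r) := by
  have hj : ∀ q < r, ∃ o, merge g j r o = (j, q) := fun q hq => by
    obtain ⟨y, hy⟩ := hg.lt_numBlocks_iff.1 (hq.trans_le hr)
    exact ⟨some y, by simp [merge, mergeSections, hy]⟩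
  rintro (_ | x) q hq
  · exact hj q hq
  simp only [merge, mergeSections] at hq ⊢
  split_ifs at hq ⊢ with h₁ h₂
  · obtain ⟨y, hy⟩ := hg x q hq
    exact ⟨some y, by simp [hy, h₁]⟩
  · obtain hq' | rfl | hq' := lt_trichotomy q r
    · exact hj q hq'
    · exact ⟨none, rfl⟩
    · obtain ⟨y, hy⟩ := hg x (q - (r + 1)) (by simp only at hq; omega)
      exact ⟨some y, by grind⟩
  · obtain ⟨y, hy⟩ := hg x q hq
    exact ⟨some y, by simp [hy, h₁, h₂]⟩

lemma split_merge {g : α → ℕ × ℕ} {j r : ℕ} (hr : numBlocks g j ≤ r + 1) :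
    split (merge g j r) = g := by
  funext x
  show splitSection j r (mergeSections j r (g x)) = g x
  refine splitSection_mergeSections fun hx => ?_
  have := rank_lt_numBlocks g x
  rw [hx] at this
  omega

lemma sharesBlock_merge_iff {g : α → ℕ × ℕ} (hg : IsPrefArrangement g) {j r : ℕ} :
    SharesBlock (merge g j r) ↔ r < numBlocks g j := by
  simp [SharesBlock, merge, mergeSections_eq_iff, hg.lt_numBlocks_iff]

lemma lt_numBlocks_split_iff {g : Option α → ℕ × ℕ} (hg : IsPrefArrangement g) {q : ℕ} :
    q < numBlocks (split g) (g none).1 ↔ q < (g none).2 ∨ q = (g none).2 ∧ SharesBlock g := by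
  simp only [(isPrefArrangement_split hg).lt_numBlocks_iff, split, splitSection_eq_iff]
  constructor
  · rintro ⟨y, hy, hq⟩
    obtain hq | rfl := hq.lt_or_eq
    · exact Or.inl hq
    · exact Or.inr ⟨rfl, y, hy⟩
  · rintro (hq | ⟨rfl, y, hy⟩)
    · obtain ⟨_ | y, hy⟩ := hg none q hq
      · exact absurd (congrArg Prod.snd hy) hq.ne'
      · exact ⟨y, hy, hq.le⟩
    · exact ⟨y, hy, le_rfl⟩

lemma numBlocks_split_of_sharesBlock {g : Option α → ℕ × ℕ} (hg : IsPrefArrangement g)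
    (h : SharesBlock g) : numBlocks (split g) (g none).1 = (g none).2 + 1 :=
  eq_of_forall_lt_iff fun q => by rw [lt_numBlocks_split_iff hg]; simp only [h, and_true]; omega

lemma numBlocks_split_of_not_sharesBlock {g : Option α → ℕ × ℕ} (hg : IsPrefArrangement g)
    (h : ¬ SharesBlock g) : numBlocks (split g) (g none).1 = (g none).2 :=
  eq_of_forall_lt_iff fun q => by rw [lt_numBlocks_split_iff hg]; simp only [h, and_false, or_false]

def mergeAt (g : BarredArrangement (m + 1) α) (j : Fin (m + 1)) (r : ℕ)
    (hr : r ≤ numBlocks g.1 j) : BarredArrangement m (Option α) :=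
  ⟨merge g.1 j r, isPrefArrangement_merge g.2.1 hr, merge_fst_le g.2.2 (Nat.le_of_lt_succ j.2) r⟩

def equivNotSharesBlock :
    {g : BarredArrangement m (Option α) // ¬ SharesBlock g.1} ≃
      Fin (m + 1) × BarredArrangement (m + 1) α where
  toFun g := splitLast g.1
  invFun p := ⟨mergeAt p.2 p.1 (numBlocks p.2.1 p.1) le_rfl,
    (sharesBlock_merge_iff p.2.2.1).not.2 (lt_irrefl _)⟩
  left_inv g := by
    refine Subtype.ext <| Subtype.ext ?_
    simp only [mergeAt, splitLast, numBlocks_split_of_not_sharesBlock g.1.2.1 g.2, merge_split]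
  right_inv p := Prod.ext (Fin.ext rfl) (Subtype.ext (split_merge (Nat.le_succ _)))

def equivSharesBlock :
    {g : BarredArrangement m (Option α) // SharesBlock g.1} ≃
      {p : Fin (m + 1) × BarredArrangement (m + 1) α // 0 < numBlocks p.2.1 p.1} where
  toFun g := ⟨splitLast g.1, by
    simp only [splitLast, numBlocks_split_of_sharesBlock g.1.2.1 g.2, Nat.succ_pos]⟩
  invFun p := ⟨mergeAt p.1.2 p.1.1 (numBlocks p.1.2.1 p.1.1 - 1) (Nat.sub_le _ _),
    (sharesBlock_merge_iff p.1.2.2.1).2 (Nat.sub_lt p.2 one_pos)⟩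
  left_inv g := by
    refine Subtype.ext <| Subtype.ext ?_
    simp only [mergeAt, splitLast, numBlocks_split_of_sharesBlock g.1.2.1 g.2, Nat.add_sub_cancel,
      merge_split]
  right_inv p := Subtype.ext <| Prod.ext (Fin.ext rfl) (Subtype.ext (split_merge (by omega)))

def equivEmptySection :
    {p : Fin (m + 1) × BarredArrangement (m + 1) α // ¬ 0 < numBlocks p.2.1 p.1} ≃
      Fin (m + 1) × BarredArrangement m α where
  toFun p := (p.1.1, ⟨Prod.map (squashSection p.1.1) id ∘ p.1.2.1, p.1.2.2.1.map_fst _, fun x => by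
    have h₁ := p.1.2.2.2 x
    have h₂ : (p.1.2.1 x).1 ≠ p.1.1 := fun h => p.2 (numBlocks_pos_iff.2 ⟨x, h⟩)
    have h₃ := p.1.1.2
    simp only [Function.comp_apply, Prod.map_fst, squashSection]
    split_ifs <;> omega⟩)
  invFun p := ⟨(p.1, ⟨Prod.map (liftSection p.1) id ∘ p.2.1, p.2.2.1.map_fst _, fun x => by
    have := p.2.2.2 x
    simp only [Function.comp_apply, Prod.map_fst, liftSection]
    split_ifs <;> omega⟩), fun h => by
    obtain ⟨x, hx⟩ := numBlocks_pos_iff.1 h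
    simp only [Function.comp_apply, Prod.map_fst, liftSection] at hx
    split_ifs at hx <;> omega⟩
  left_inv p := Subtype.ext <| Prod.ext rfl <| Subtype.ext <| funext fun x => Prod.ext
    (liftSection_squashSection fun h => p.2 (numBlocks_pos_iff.2 ⟨x, h⟩)) rfl
  right_inv p := Prod.ext rfl <| Subtype.ext <| funext fun x => Prod.ext
    (squashSection_liftSection _ _) rfl

theorem card_option_add_mul_card (m : ℕ) (α : Type*) [Fintype α] :
    Nat.card (BarredArrangement m (Option α)) + (m + 1) * Nat.card (BarredArrangement m α) =
      2 * ((m + 1) * Nat.card (BarredArrangement (m + 1) α)) := by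
  classical
  have hshares := Nat.card_congr
    (Equiv.sumCompl fun g : BarredArrangement m (Option α) => SharesBlock g.1)
  have hempty := Nat.card_congr
    (Equiv.sumCompl fun p : Fin (m + 1) × BarredArrangement (m + 1) α => 0 < numBlocks p.2.1 p.1)
  rw [Nat.card_sum, Nat.card_congr equivSharesBlock, Nat.card_congr equivNotSharesBlock]
    at hshares
  rw [Nat.card_sum, Nat.card_congr equivEmptySection] at hempty
  simp only [Nat.card_prod, Nat.card_fin] at hshares hempty
  omega

end Fintype

end BarredArrangement

theorem bpa_eq_card (m ℓ : ℕ) : bpa m ℓ = Nat.card (BarredArrangement m (Fin ℓ)) := by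
  rw [bpa, ← Nat.card_eq_fintype_card]
  exact (Nat.card_congr (BarredArrangement.equivIsBPA m ℓ)).symm

theorem bpa_succ_add_mul_bpa (m ℓ : ℕ) :
    bpa m (ℓ + 1) + (m + 1) * bpa m ℓ = 2 * ((m + 1) * bpa (m + 1) ℓ) := by
  rw [bpa_eq_card, bpa_eq_card, bpa_eq_card,
    Nat.card_congr (BarredArrangement.congr (finSuccEquiv ℓ))]
  exact BarredArrangement.card_option_add_mul_card m (Fin ℓ)

theorem stirling1_eq_stirlingFirst : ∀ n k, stirling1 n k = Nat.stirlingFirst n k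
  | 0, 0 | 0, _ + 1 | _ + 1, 0 => rfl
  | n + 1, k + 1 => by
    rw [stirling1, Nat.stirlingFirst_succ_succ, stirling1_eq_stirlingFirst n (k + 1),
      stirling1_eq_stirlingFirst n k]

theorem Nat.sum_range_stirlingFirst_succ_mul {R : Type*} [CommSemiring R] (m : ℕ) (a : ℕ → R) :
    ∑ i ∈ Finset.range (m + 2), (stirlingFirst (m + 2) (i + 1) : R) * a i =
      ∑ i ∈ Finset.range (m + 1), (stirlingFirst (m + 1) (i + 1) : R) * a (i + 1) +
        (m + 1) * ∑ i ∈ Finset.range (m + 1), (stirlingFirst (m + 1) (i + 1) : R) * a i := by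
  calc ∑ i ∈ Finset.range (m + 2), (stirlingFirst (m + 2) (i + 1) : R) * a i
      = ∑ i ∈ Finset.range (m + 2), (stirlingFirst (m + 1) i : R) * a i +
          (m + 1) * ∑ i ∈ Finset.range (m + 2), (stirlingFirst (m + 1) (i + 1) : R) * a i := by
        rw [Finset.mul_sum, ← Finset.sum_add_distrib]
        refine Finset.sum_congr rfl fun i _ => ?_
        rw [stirlingFirst_succ_succ]
        push_cast
        ring
    _ = _ := by
        rw [Finset.sum_range_succ' _ (m + 1), Finset.sum_range_succ _ (m + 1),
          stirlingFirst_eq_zero_of_lt (Nat.lt_succ_self _)]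
        simp

/-- For every `m ≥ 0` and `ℓ ≥ 0`,
`2^m · m! · r_{m,ℓ} = ∑_{i=0}^{m} c(m+1, i+1) · r_{ℓ+i}`. -/
theorem bpa_eq_sum_stirling1 (m ℓ : ℕ) :
    2 ^ m * Nat.factorial m * bpa m ℓ =
      ∑ i ∈ Finset.range (m + 1), stirling1 (m + 1) (i + 1) * bpa 0 (ℓ + i) := by
  simp only [stirling1_eq_stirlingFirst]
  induction m generalizing ℓ with
  | zero => simp [Nat.stirlingFirst_self]
  | succ m ih =>
    calc 2 ^ (m + 1) * (m + 1).factorial * bpa (m + 1) ℓ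
        = 2 ^ m * m.factorial * (2 * ((m + 1) * bpa (m + 1) ℓ)) := by
          rw [Nat.factorial_succ]; ring
      _ = 2 ^ m * m.factorial * bpa m (ℓ + 1) + (m + 1) * (2 ^ m * m.factorial * bpa m ℓ) := by
          rw [← bpa_succ_add_mul_bpa]; ring
      _ = _ := by
          rw [ih, ih]
          simp only [add_right_comm ℓ 1]
          exact (Nat.sum_range_stirlingFirst_succ_mul m fun i => bpa 0 (ℓ + i)).symm
end

section
/- For every integer ℓ ≥ 0, 2·r_{1,ℓ} = r_ℓ + r_{ℓ+1}, i.e., the number of barred preferential arrangements of [ℓ] with one bar equals (r_ℓ + r_{ℓ+1})/2. -/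
open Finset Function

/-!
Sort the blocks of a barred preferential arrangement of `[ℓ]` with `k` blocks in all into one
sequence, section 0 before section 1: this gives a surjection `[ℓ] → Fin k`, and the arrangement
is recovered from it together with the number `s ∈ {0, …, k}` of blocks before the bar. Writing
`S(ℓ, k)` for the number of surjections `[ℓ] → Fin k`, this gives `r_ℓ = ∑ₖ S(ℓ, k)` and
`r_{1,ℓ} = ∑ₖ (k + 1) S(ℓ, k)`. Removing the last point of a surjection onto `Fin (k + 1)` leaves
either a surjection or a surjection onto the complement of the image of that point, so
`S(ℓ + 1, k + 1) = (k + 1) (S(ℓ, k + 1) + S(ℓ, k))`, and hence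
`r_{ℓ+1} = ∑ₖ k S(ℓ, k) + r_{1,ℓ} = 2 r_{1,ℓ} - r_ℓ`.
-/

theorem Finset.eq_range_card_of_isLowerSet {s : Finset ℕ} (hs : IsLowerSet (s : Set ℕ)) :
    s = range #s := by
  refine eq_of_subset_of_card_le (fun a ha => mem_range.2 ?_) (card_range _).le
  have : range (a + 1) ⊆ s := fun b hb => hs (Nat.lt_succ_iff.1 (mem_range.1 hb)) ha
  simpa using card_le_card this

section BarredArrangement

variable {m ℓ : ℕ}

def usedRanks (i : Fin (m + 1)) (f : Fin ℓ → Fin (m + 1) × Fin ℓ) : Finset ℕ :=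
  (univ.filter fun x => (f x).1 = i).image fun x => ((f x).2 : ℕ)

def numBlocks (i : Fin (m + 1)) (f : Fin ℓ → Fin (m + 1) × Fin ℓ) : ℕ :=
  #(usedRanks i f)

def totalBlocks (f : Fin ℓ → Fin (m + 1) × Fin ℓ) : ℕ :=
  ∑ i, numBlocks i f

theorem mem_usedRanks {i : Fin (m + 1)} {f : Fin ℓ → Fin (m + 1) × Fin ℓ} {a : ℕ} :
    a ∈ usedRanks i f ↔ ∃ x, (f x).1 = i ∧ ((f x).2 : ℕ) = a := by
  simp [usedRanks]

theorem isBPA_iff_usedRanks_eq_range {f : Fin ℓ → Fin (m + 1) × Fin ℓ} :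
    IsBPA m ℓ f ↔ ∀ i, usedRanks i f = range (numBlocks i f) := by
  constructor
  · intro h i
    refine eq_range_card_of_isLowerSet fun a b hba ha => ?_
    obtain ⟨x, rfl, rfl⟩ := mem_usedRanks.1 ha
    rcases hba.lt_or_eq with hlt | rfl
    · obtain ⟨y, hy, hyb⟩ := h x ⟨b, hlt.trans (f x).2.isLt⟩ hlt
      exact mem_usedRanks.2 ⟨y, hy, by rw [hyb]⟩
    · exact ha
  · intro h x r hr
    have hx : ((f x).2 : ℕ) ∈ usedRanks (f x).1 f := mem_usedRanks.2 ⟨x, rfl, rfl⟩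
    rw [h, mem_range] at hx
    have hr' : (r : ℕ) ∈ usedRanks (f x).1 f := by
      rw [h, mem_range]; exact (Fin.lt_def.1 hr).trans hx
    obtain ⟨y, hy, hyr⟩ := mem_usedRanks.1 hr'
    exact ⟨y, hy, Fin.ext hyr⟩

theorem isBPA_of_usedRanks_eq_range {f : Fin ℓ → Fin (m + 1) × Fin ℓ} (c : Fin (m + 1) → ℕ)
    (h : ∀ i, usedRanks i f = range (c i)) : IsBPA m ℓ f ∧ ∀ i, numBlocks i f = c i := by
  have hc : ∀ i, numBlocks i f = c i := fun i => by rw [numBlocks, h, card_range]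
  exact ⟨isBPA_iff_usedRanks_eq_range.2 fun i => by rw [h, hc], hc⟩

namespace IsBPA

variable {f : Fin ℓ → Fin (m + 1) × Fin ℓ}

theorem exists_rank_eq_iff (hf : IsBPA m ℓ f) {i : Fin (m + 1)} {a : ℕ} :
    (∃ x, (f x).1 = i ∧ ((f x).2 : ℕ) = a) ↔ a < numBlocks i f := by
  rw [← mem_usedRanks, isBPA_iff_usedRanks_eq_range.1 hf, mem_range]

theorem rank_lt_numBlocks (hf : IsBPA m ℓ f) (x : Fin ℓ) : ((f x).2 : ℕ) < numBlocks (f x).1 f :=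
  hf.exists_rank_eq_iff.1 ⟨x, rfl, rfl⟩

end IsBPA

theorem totalBlocks_le (f : Fin ℓ → Fin (m + 1) × Fin ℓ) : totalBlocks f ≤ ℓ := by
  calc totalBlocks f ≤ ∑ i, #(univ.filter fun x => (f x).1 = i) :=
        sum_le_sum fun i _ => card_image_le
    _ = ℓ := by
        rw [← card_eq_sum_card_fiberwise (fun x _ => mem_univ _), card_univ, Fintype.card_fin]

theorem Fintype.card_subtype_eq_sum_card_fiberwise {α : Type*} [Fintype α] (p : α → Prop)
    [DecidablePred p] (N : α → ℕ) {n : ℕ} (hN : ∀ a, p a → N a < n) :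
    Fintype.card {a // p a} = ∑ k ∈ range n, Fintype.card {a // p a ∧ N a = k} := by
  simp only [Fintype.card_subtype]
  rw [card_eq_sum_card_fiberwise (f := N) (t := range n)
    fun a ha => mem_range.2 (hN a (mem_filter.1 ha).2)]
  simp only [filter_filter]

theorem bpa_eq_sum_card_fiber (m ℓ : ℕ) :
    bpa m ℓ = ∑ k ∈ range (ℓ + 1),
      Fintype.card {f : Fin ℓ → Fin (m + 1) × Fin ℓ // IsBPA m ℓ f ∧ totalBlocks f = k} :=
  Fintype.card_subtype_eq_sum_card_fiberwise _ _ fun f _ => Nat.lt_succ_of_le (totalBlocks_le f)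

end BarredArrangement

def surjCount (n k : ℕ) : ℕ :=
  Fintype.card {g : Fin n → Fin k // Surjective g}

theorem surjCount_eq_zero_of_lt {n k : ℕ} (h : n < k) : surjCount n k = 0 :=
  Fintype.card_eq_zero_iff.2 ⟨fun g => by
    have := Fintype.card_le_of_surjective g.1 g.2
    simp only [Fintype.card_fin] at this
    omega⟩

theorem surjCount_succ_zero (n : ℕ) : surjCount (n + 1) 0 = 0 :=
  Fintype.card_eq_zero_iff.2 ⟨fun g => (g.1 0).elim0⟩

theorem exists_val_eq_iff_of_surjective {n k : ℕ} {g : Fin n → Fin k} (hg : Surjective g)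
    {a : ℕ} : (∃ x, (g x : ℕ) = a) ↔ a < k :=
  ⟨fun ⟨x, hx⟩ => hx ▸ (g x).isLt, fun ha => (hg ⟨a, ha⟩).imp fun _ hx => by rw [hx]⟩

section SurjCountSucc

variable {n t : ℕ}

def snocSurj (p : Fin (t + 1) × ({h : Fin n → Fin (t + 1) // Surjective h} ⊕
    {h : Fin n → Fin t // Surjective h})) : Fin (n + 1) → Fin (t + 1) :=
  match p with
  | (v, .inl h) => Fin.snoc (α := fun _ => Fin (t + 1)) h.1 v
  | (v, .inr h) => Fin.snoc (α := fun _ => Fin (t + 1)) (v.succAbove ∘ h.1) v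

theorem surjective_snocSurj (p : Fin (t + 1) × ({h : Fin n → Fin (t + 1) // Surjective h} ⊕
    {h : Fin n → Fin t // Surjective h})) : Surjective (snocSurj p) := by
  rcases p with ⟨v, h | h⟩ <;> intro y
  · obtain ⟨x, hx⟩ := h.2 y
    exact ⟨x.castSucc, by simp [snocSurj, hx]⟩
  · rcases eq_or_ne y v with rfl | hy
    · exact ⟨Fin.last n, by simp [snocSurj]⟩
    · obtain ⟨u, rfl⟩ := Fin.exists_succAbove_eq hy
      obtain ⟨x, rfl⟩ := h.2 u
      exact ⟨x.castSucc, by simp [snocSurj]⟩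

theorem exists_succAbove_comp_eq_of_not_surjective {g : Fin (n + 1) → Fin (t + 1)}
    (hg : Surjective g) (hs : ¬ Surjective (g ∘ Fin.castSucc)) :
    ∃ h : Fin n → Fin t, Surjective h ∧ (g (Fin.last n)).succAbove ∘ h = g ∘ Fin.castSucc := by
  -- the value missed by `g ∘ castSucc` must be the one taken at `last n`
  have hmiss : ∀ x : Fin n, g x.castSucc ≠ g (Fin.last n) := by
    obtain ⟨w, hw⟩ := not_forall.1 hs
    obtain ⟨z, rfl⟩ := hg w
    induction z using Fin.lastCases with
    | last => exact fun x hx => hw ⟨x, hx⟩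
    | cast z => exact absurd ⟨z, rfl⟩ hw
  choose h hh using fun x => Fin.exists_succAbove_eq (hmiss x)
  refine ⟨h, fun u => ?_, funext hh⟩
  obtain ⟨z, hz⟩ := hg ((g (Fin.last n)).succAbove u)
  induction z using Fin.lastCases with
  | last => exact absurd hz.symm (Fin.succAbove_ne _ _)
  | cast x => exact ⟨x, Fin.succAbove_right_injective (by rw [hh, hz])⟩

theorem bijective_snocSurj :
    Bijective fun p => (⟨snocSurj p, surjective_snocSurj p⟩ :
      {g : Fin (n + 1) → Fin (t + 1) // Surjective g}) := by
  constructor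
  · rintro ⟨v, h⟩ ⟨v', h'⟩ he
    have hlast := congrFun (congrArg Subtype.val he) (Fin.last n)
    have hinit (x : Fin n) := congrFun (congrArg Subtype.val he) x.castSucc
    rcases h with h | h <;> rcases h' with h' | h' <;>
      simp only [snocSurj, Fin.snoc_last, Fin.snoc_castSucc, comp_apply] at hlast hinit <;>
      subst hlast
    · exact congrArg _ (congrArg _ (Subtype.ext (funext hinit)))
    · obtain ⟨x, hx⟩ := h.2 v
      exact absurd ((hinit x).symm.trans hx) (Fin.succAbove_ne _ _)
    · obtain ⟨x, hx⟩ := h'.2 v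
      exact absurd ((hinit x).trans hx) (Fin.succAbove_ne _ _)
    · exact congrArg _ (congrArg _ (Subtype.ext (funext fun x =>
        Fin.succAbove_right_injective (hinit x))))
  · rintro ⟨g, hg⟩
    by_cases hs : Surjective (g ∘ Fin.castSucc)
    · exact ⟨(g (Fin.last n), .inl ⟨_, hs⟩), Subtype.ext (Fin.snoc_init_self g)⟩
    · obtain ⟨h, hh, hgh⟩ := exists_succAbove_comp_eq_of_not_surjective hg hs
      refine ⟨(g (Fin.last n), .inr ⟨h, hh⟩), Subtype.ext ?_⟩
      simp only [snocSurj, hgh]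
      exact Fin.snoc_init_self g

end SurjCountSucc

theorem surjCount_succ_succ (n t : ℕ) :
    surjCount (n + 1) (t + 1) = (t + 1) * (surjCount n (t + 1) + surjCount n t) := by
  rw [surjCount, ← Fintype.card_of_bijective bijective_snocSurj]
  simp [surjCount]

section Fibers

variable {ℓ k : ℕ}

theorem totalBlocks_of_fin_one (f : Fin ℓ → Fin 1 × Fin ℓ) : totalBlocks f = numBlocks 0 f :=
  Fin.sum_univ_one _

theorem totalBlocks_of_fin_two (f : Fin ℓ → Fin 2 × Fin ℓ) :
    totalBlocks f = numBlocks 0 f + numBlocks 1 f :=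
  Fin.sum_univ_two _

def bpaZeroFiberEquiv (hk : k ≤ ℓ) :
    {f : Fin ℓ → Fin 1 × Fin ℓ // IsBPA 0 ℓ f ∧ totalBlocks f = k} ≃
      {g : Fin ℓ → Fin k // Surjective g} where
  toFun f := by
    have hc := f.2.2
    rw [totalBlocks_of_fin_one] at hc
    refine ⟨fun x => ⟨(f.1 x).2, ?_⟩, fun y => ?_⟩
    · simpa [Fin.fin_one_eq_zero (f.1 x).1, hc] using f.2.1.rank_lt_numBlocks x
    · obtain ⟨x, -, hx⟩ := (f.2.1.exists_rank_eq_iff (i := 0)).2 (by rw [hc]; exact y.isLt)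
      exact ⟨x, Fin.ext hx⟩
  invFun g := by
    refine ⟨fun x => (0, Fin.castLE hk (g.1 x)), ?_⟩
    obtain ⟨hf, hc⟩ := isBPA_of_usedRanks_eq_range
        (f := fun x => ((0 : Fin 1), Fin.castLE hk (g.1 x))) (fun _ => k) fun i => by
      ext a
      simp [mem_usedRanks, Fin.fin_one_eq_zero i, exists_val_eq_iff_of_surjective g.2]
    exact ⟨hf, by rw [totalBlocks_of_fin_one, hc]⟩
  left_inv f := Subtype.ext (funext fun x => Prod.ext (Subsingleton.elim _ _) rfl)
  right_inv g := rfl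

def flatRank (f : Fin ℓ → Fin 2 × Fin ℓ) (x : Fin ℓ) : ℕ :=
  if (f x).1 = 0 then (f x).2 else numBlocks 0 f + (f x).2

theorem IsBPA.exists_flatRank_eq_iff {f : Fin ℓ → Fin 2 × Fin ℓ} (hf : IsBPA 1 ℓ f) {a : ℕ} :
    (∃ x, flatRank f x = a) ↔ a < totalBlocks f := by
  rw [totalBlocks_of_fin_two]
  constructor
  · rintro ⟨x, rfl⟩
    have := hf.rank_lt_numBlocks x
    unfold flatRank
    split_ifs with h
    · rw [h] at this; omega
    · rw [Fin.eq_one_of_ne_zero _ h] at this; omega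
  · intro ha
    by_cases ha0 : a < numBlocks 0 f
    · obtain ⟨x, hx, rfl⟩ := hf.exists_rank_eq_iff.2 ha0
      exact ⟨x, if_pos hx⟩
    · have ha1 : a - numBlocks 0 f < numBlocks 1 f := by omega
      obtain ⟨x, hx, hxa⟩ := hf.exists_rank_eq_iff.2 ha1
      exact ⟨x, by rw [flatRank, if_neg (by rw [hx]; decide)]; omega⟩

def splitAt (hk : k ≤ ℓ) (s : ℕ) (g : Fin ℓ → Fin k) (x : Fin ℓ) : Fin 2 × Fin ℓ :=
  if (g x : ℕ) < s then (0, Fin.castLE hk (g x)) else (1, ⟨g x - s, by omega⟩)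

theorem usedRanks_splitAt (hk : k ≤ ℓ) {s : ℕ} (hs : s ≤ k) {g : Fin ℓ → Fin k}
    (hg : Surjective g) (i : Fin 2) : usedRanks i (splitAt hk s g) = range (![s, k - s] i) := by
  ext a
  rw [mem_usedRanks, mem_range]
  fin_cases i <;> dsimp <;> constructor
  · rintro ⟨x, hx, rfl⟩
    unfold splitAt at hx ⊢
    split_ifs at hx ⊢ with h
    · simpa using h
    · simp at hx
  · intro ha
    obtain ⟨x, hx⟩ := hg ⟨a, by omega⟩
    exact ⟨x, by simp [splitAt, hx, ha]⟩
  · rintro ⟨x, hx, rfl⟩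
    unfold splitAt at hx ⊢
    split_ifs at hx ⊢ with h
    · simp at hx
    · simp; omega
  · intro ha
    obtain ⟨x, hx⟩ := hg ⟨a + s, by omega⟩
    exact ⟨x, by simp [splitAt, hx]⟩

theorem isBPA_splitAt (hk : k ≤ ℓ) {s : ℕ} (hs : s ≤ k) {g : Fin ℓ → Fin k} (hg : Surjective g) :
    IsBPA 1 ℓ (splitAt hk s g) ∧ numBlocks 0 (splitAt hk s g) = s ∧
      totalBlocks (splitAt hk s g) = k := by
  obtain ⟨hf, hc⟩ := isBPA_of_usedRanks_eq_range _ (usedRanks_splitAt hk hs hg)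
  refine ⟨hf, hc 0, ?_⟩
  rw [totalBlocks_of_fin_two, hc 0, hc 1]
  simp only [Matrix.cons_val_zero, Matrix.cons_val_one]
  omega

theorem flatRank_splitAt (hk : k ≤ ℓ) {s : ℕ} (hs : s ≤ k) {g : Fin ℓ → Fin k}
    (hg : Surjective g) (x : Fin ℓ) : flatRank (splitAt hk s g) x = g x := by
  rw [flatRank, (isBPA_splitAt hk hs hg).2.1]
  by_cases h : (g x : ℕ) < s <;> simp [splitAt, h]
  omega

theorem splitAt_flatRank {f : Fin ℓ → Fin 2 × Fin ℓ} (hf : IsBPA 1 ℓ f) (hk : k ≤ ℓ)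
    {g : Fin ℓ → Fin k} (hg : ∀ x, (g x : ℕ) = flatRank f x) :
    splitAt hk (numBlocks 0 f) g = f := by
  funext x
  have hlt := hf.rank_lt_numBlocks x
  have hgx := hg x
  unfold flatRank at hgx
  by_cases h : (f x).1 = 0
  · rw [if_pos h] at hgx
    rw [h] at hlt
    have hx : (g x : ℕ) < numBlocks 0 f := by omega
    simp only [splitAt, if_pos hx]
    exact Prod.ext h.symm (Fin.ext (by simp [hgx]))
  · rw [if_neg h] at hgx
    rw [Fin.eq_one_of_ne_zero _ h] at hlt
    have hx : ¬ (g x : ℕ) < numBlocks 0 f := by omega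
    simp only [splitAt, if_neg hx]
    exact Prod.ext (Fin.eq_one_of_ne_zero _ h).symm (Fin.ext (by simp [hgx]))

def bpaOneFiberEquiv (hk : k ≤ ℓ) :
    {f : Fin ℓ → Fin 2 × Fin ℓ // IsBPA 1 ℓ f ∧ totalBlocks f = k} ≃
      Fin (k + 1) × {g : Fin ℓ → Fin k // Surjective g} where
  toFun f :=
    (⟨numBlocks 0 f.1, by have := f.2.2; rw [totalBlocks_of_fin_two] at this; omega⟩,
      ⟨fun x => ⟨flatRank f.1 x, (f.2.1.exists_flatRank_eq_iff.1 ⟨x, rfl⟩).trans_eq f.2.2⟩,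
        fun y => (f.2.1.exists_flatRank_eq_iff.2 (y.isLt.trans_eq f.2.2.symm)).imp
          fun _ hx => Fin.ext hx⟩)
  invFun p :=
    have h := isBPA_splitAt hk p.1.is_le p.2.2
    ⟨splitAt hk p.1 p.2.1, h.1, h.2.2⟩
  left_inv f := Subtype.ext (splitAt_flatRank f.2.1 hk fun _ => rfl)
  right_inv p := Prod.ext (Fin.ext (isBPA_splitAt hk p.1.is_le p.2.2).2.1)
    (Subtype.ext (funext fun x => Fin.ext (flatRank_splitAt hk p.1.is_le p.2.2 x)))

end Fibers

theorem bpa_zero_eq_sum_surjCount (ℓ : ℕ) : bpa 0 ℓ = ∑ k ∈ range (ℓ + 1), surjCount ℓ k := by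
  rw [bpa_eq_sum_card_fiber]
  exact sum_congr rfl fun k hk =>
    Fintype.card_congr (bpaZeroFiberEquiv (Nat.lt_succ_iff.1 (mem_range.1 hk)))

theorem bpa_one_eq_sum_surjCount (ℓ : ℕ) :
    bpa 1 ℓ = ∑ k ∈ range (ℓ + 1), (k + 1) * surjCount ℓ k := by
  rw [bpa_eq_sum_card_fiber]
  refine sum_congr rfl fun k hk => ?_
  rw [Fintype.card_congr (bpaOneFiberEquiv (Nat.lt_succ_iff.1 (mem_range.1 hk))),
    Fintype.card_prod, Fintype.card_fin, surjCount]

theorem sum_range_surjCount_succ (n : ℕ) :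
    ∑ k ∈ range (n + 2), surjCount (n + 1) k =
      ∑ k ∈ range (n + 1), k * surjCount n k + ∑ k ∈ range (n + 1), (k + 1) * surjCount n k := by
  have hshift : ∑ k ∈ range (n + 1), (k + 1) * surjCount n (k + 1) =
      ∑ k ∈ range (n + 1), k * surjCount n k := by
    have h := sum_range_succ' (fun k => k * surjCount n k) (n + 1)
    rw [sum_range_succ, surjCount_eq_zero_of_lt (Nat.lt_succ_self n)] at h
    simpa using h.symm
  rw [sum_range_succ', surjCount_succ_zero, add_zero]
  simp only [surjCount_succ_succ, mul_add, sum_add_distrib, hshift]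

/-- For every `ℓ ≥ 0`, `2 · r_{1,ℓ} = r_ℓ + r_{ℓ+1}`. -/
theorem two_mul_bpa_one (ℓ : ℕ) :
    2 * bpa 1 ℓ = bpa 0 ℓ + bpa 0 (ℓ + 1) := by
  rw [bpa_one_eq_sum_surjCount, bpa_zero_eq_sum_surjCount, bpa_zero_eq_sum_surjCount,
    sum_range_surjCount_succ]
  have h : ∑ k ∈ range (ℓ + 1), (k + 1) * surjCount ℓ k =
      ∑ k ∈ range (ℓ + 1), k * surjCount ℓ k + ∑ k ∈ range (ℓ + 1), surjCount ℓ k := by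
    rw [← sum_add_distrib]
    exact sum_congr rfl fun k _ => by ring
  omega
end

section
/- For every integer m ≥ 0 and every integer ℓ ≥ 1, s_{m,ℓ} = ∑_{i=0}^{m} (-1)^{m-i} · C(m+1, i+1) · r_{i,ℓ}, where C(m+1,i+1) is the binomial coefficient (an identity of integers; equivalently, over ℤ). -/
/-- `IsSBPA m ℓ f` : `f` encodes a *special* barred preferential arrangement, i.e. a barred
preferential arrangement in which every section is nonempty. -/
def IsSBPA (m ℓ : ℕ) (f : Fin ℓ → Fin (m + 1) × Fin ℓ) : Prop :=
  IsBPA m ℓ f ∧ ∀ j : Fin (m + 1), ∃ x : Fin ℓ, (f x).1 = j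

instance (m ℓ : ℕ) : DecidablePred (IsSBPA m ℓ) := fun f => by unfold IsSBPA; infer_instance

/-- `sbpa m ℓ` : the number of special barred preferential arrangements of `[ℓ]` with `m` bars. -/
def sbpa (m ℓ : ℕ) : ℕ :=
  Fintype.card { f : Fin ℓ → Fin (m + 1) × Fin ℓ // IsSBPA m ℓ f }

/-! Grouping the barred preferential arrangements of `[ℓ]` with `m` bars by their set of nonempty
sections, and relabelling those `i + 1` sections as the sections of an arrangement with `i` bars,
gives `r_{m,ℓ} = ∑_i C(m+1, i+1) s_{i,ℓ}` (for `ℓ ≥ 1` some section is nonempty). Binomial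
inversion turns this into the claimed alternating sum. -/

open Finset Function

theorem sum_Ico_neg_one_pow_mul_choose_mul_choose {R : Type*} [CommRing R] {j n : ℕ}
    (hj : j ≤ n) :
    ∑ k ∈ Ico j (n + 1), (-1) ^ (n - k) * (n.choose k : R) * (k.choose j : R) =
      if j = n then 1 else 0 := by
  -- after `k = j + t` the sum is `C(n, j)` times the binomial expansion of `(1 + (-1)) ^ (n - j)`
  have hterm : ∀ t ∈ range (n - j + 1),
      (-1) ^ (n - (j + t)) * (n.choose (j + t) : R) * ((j + t).choose j : R) =
        n.choose j * (1 ^ t * (-1) ^ (n - j - t) * ((n - j).choose t : R)) := by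
    intro t _
    have hchoose := Nat.choose_mul (n := n) (k := j + t) (s := j) (Nat.le_add_right j t)
    rw [Nat.add_sub_cancel_left] at hchoose
    rw [one_pow, one_mul, Nat.sub_sub, mul_assoc, ← Nat.cast_mul, hchoose]
    push_cast
    ring
  rw [sum_Ico_eq_sum_range, Nat.sub_add_comm hj, sum_congr rfl hterm, ← mul_sum, ← add_pow,
    add_neg_cancel, zero_pow_eq]
  rcases eq_or_lt_of_le hj with rfl | hlt
  · simp
  · simp [hlt.ne, Nat.sub_ne_zero_of_lt hlt]

theorem binomial_inversion {R : Type*} [CommRing R] {f g : ℕ → R}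
    (hfg : ∀ n, f n = ∑ k ∈ range (n + 1), (n.choose k : R) * g k) (n : ℕ) :
    g n = ∑ k ∈ range (n + 1), (-1) ^ (n - k) * (n.choose k : R) * f k := by
  symm
  calc ∑ k ∈ range (n + 1), (-1) ^ (n - k) * (n.choose k : R) * f k
      = ∑ k ∈ Ico 0 (n + 1), ∑ j ∈ Ico 0 (k + 1),
          (-1) ^ (n - k) * (n.choose k : R) * (k.choose j : R) * g j := by
        simp only [hfg, mul_sum, mul_assoc, range_eq_Ico]
    _ = ∑ j ∈ range (n + 1), ∑ k ∈ Ico j (n + 1),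
          (-1) ^ (n - k) * (n.choose k : R) * (k.choose j : R) * g j := by
        rw [range_eq_Ico, sum_Ico_Ico_comm]
    _ = ∑ j ∈ range (n + 1), if j = n then g j else 0 := by
        refine sum_congr rfl fun j hj => ?_
        rw [← sum_mul, sum_Ico_neg_one_pow_mul_choose_mul_choose
          (Nat.lt_succ_iff.1 (mem_range.1 hj)), ite_mul, one_mul, zero_mul]
    _ = g n := by simp

section Sections

variable {m ℓ : ℕ}

def occupiedSections (f : Fin ℓ → Fin (m + 1) × Fin ℓ) : Finset (Fin (m + 1)) :=
  univ.image fun x => (f x).1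

theorem occupiedSections_nonempty (hℓ : 0 < ℓ) (f : Fin ℓ → Fin (m + 1) × Fin ℓ) :
    (occupiedSections f).Nonempty :=
  image_nonempty.2 ⟨⟨0, hℓ⟩, mem_univ _⟩

theorem isSBPA_iff (f : Fin ℓ → Fin (m + 1) × Fin ℓ) :
    IsSBPA m ℓ f ↔ IsBPA m ℓ f ∧ occupiedSections f = univ := by
  simp [IsSBPA, occupiedSections, eq_univ_iff_forall]

theorem isBPA_prodMap_comp_iff {j : ℕ} {e : Fin (j + 1) → Fin (m + 1)} (he : Injective e)
    (g : Fin ℓ → Fin (j + 1) × Fin ℓ) : IsBPA m ℓ (Prod.map e id ∘ g) ↔ IsBPA j ℓ g := by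
  simp [IsBPA, he.eq_iff]

theorem occupiedSections_prodMap_comp {j : ℕ} (e : Fin (j + 1) → Fin (m + 1))
    (g : Fin ℓ → Fin (j + 1) × Fin ℓ) :
    occupiedSections (Prod.map e id ∘ g) = (occupiedSections g).image e := by
  simp [occupiedSections, image_image, comp_def]

theorem prodMap_comp_invFun_comp {j : ℕ} {e : Fin (j + 1) → Fin (m + 1)}
    {f : Fin ℓ → Fin (m + 1) × Fin ℓ} (hf : occupiedSections f ⊆ univ.image e) :
    Prod.map e id ∘ Prod.map (invFun e) id ∘ f = f := by
  funext x
  have hx : (f x).1 ∈ Set.range e := by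
    simpa using hf (mem_image_of_mem (fun x => (f x).1) (mem_univ x))
  exact Prod.ext (invFun_eq hx) rfl

theorem card_isBPA_occupiedSections_eq {j : ℕ} {S : Finset (Fin (m + 1))} (hS : #S = j + 1) :
    #{f : Fin ℓ → Fin (m + 1) × Fin ℓ | IsBPA m ℓ f ∧ occupiedSections f = S} = sbpa j ℓ := by
  set e := S.orderEmbOfFin hS
  have he : Injective e := e.injective
  have hS : univ.image e = S := image_orderEmbOfFin_univ S hS
  rw [sbpa, Fintype.card_subtype]
  symm
  refine card_nbij' (Prod.map e id ∘ ·) (Prod.map (invFun e) id ∘ ·) ?_ ?_ ?_ ?_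
  · intro g hg
    simp only [coe_filter, mem_univ, true_and, Set.mem_ofPred_eq, isSBPA_iff] at hg ⊢
    rw [isBPA_prodMap_comp_iff he, occupiedSections_prodMap_comp, hg.2, hS]
    exact ⟨hg.1, rfl⟩
  · intro f hf
    simp only [coe_filter, mem_univ, true_and, Set.mem_ofPred_eq, isSBPA_iff] at hf ⊢
    have hinv := prodMap_comp_invFun_comp (e := e) (hf.2.trans hS.symm).subset
    refine ⟨(isBPA_prodMap_comp_iff he _).1 (by rw [hinv]; exact hf.1), image_injective he ?_⟩
    rw [← occupiedSections_prodMap_comp, hinv, hf.2, hS]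
  · intro g _
    funext x
    exact Prod.ext (leftInverse_invFun he (g x).1) rfl
  · intro f hf
    simp only [coe_filter, mem_univ, true_and, Set.mem_ofPred_eq] at hf
    exact prodMap_comp_invFun_comp (hf.2.trans hS.symm).subset

theorem bpa_eq_sum_choose_mul_sbpa (hℓ : 0 < ℓ) :
    bpa m ℓ = ∑ i ∈ range (m + 1), (m + 1).choose (i + 1) * sbpa i ℓ := by
  let G : ℕ → ℕ := fun k => if k = 0 then 0 else sbpa (k - 1) ℓ
  have hfiber : ∀ S : Finset (Fin (m + 1)),
      #{f : Fin ℓ → Fin (m + 1) × Fin ℓ | IsBPA m ℓ f ∧ occupiedSections f = S} = G #S := by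
    intro S
    rcases Nat.eq_zero_or_eq_succ_pred #S with h | h
    · rw [card_eq_zero.1 h]
      simp [G, (occupiedSections_nonempty hℓ _).ne_empty]
    · rw [card_isBPA_occupiedSections_eq h, h]
      simp [G]
  calc bpa m ℓ
      = ∑ S ∈ univ.powerset,
          #{f : Fin ℓ → Fin (m + 1) × Fin ℓ | IsBPA m ℓ f ∧ occupiedSections f = S} := by
        rw [bpa, Fintype.card_subtype, card_eq_sum_card_fiberwise (f := occupiedSections)
          (t := univ.powerset) (fun f _ => mem_powerset.2 (subset_univ _))]
        simp only [filter_filter]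
    _ = ∑ i ∈ range (m + 1), (m + 1).choose (i + 1) * sbpa i ℓ := by
        rw [sum_congr rfl fun S _ => hfiber S, sum_powerset_apply_card, card_univ,
          Fintype.card_fin, sum_range_succ']
        simp [G]

end Sections

/-- For every `m ≥ 0` and `ℓ ≥ 1`,
`s_{m,ℓ} = ∑_{i=0}^{m} (-1)^{m-i} · C(m+1, i+1) · r_{i,ℓ}` (as integers). -/
theorem sbpa_eq_alternating_sum (m ℓ : ℕ) (hℓ : 1 ≤ ℓ) :
    (sbpa m ℓ : ℤ) =
      ∑ i ∈ Finset.range (m + 1),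
        (-1) ^ (m - i) * (Nat.choose (m + 1) (i + 1) : ℤ) * (bpa i ℓ : ℤ) := by
  -- indexed by the number `n` of sections, i.e. `n - 1` bars
  let r : ℕ → ℤ := fun n => if n = 0 then 0 else bpa (n - 1) ℓ
  let s : ℕ → ℤ := fun n => if n = 0 then 0 else sbpa (n - 1) ℓ
  have hrs : ∀ n, r n = ∑ k ∈ range (n + 1), (n.choose k : ℤ) * s k := by
    rintro (_ | n)
    · simp [r, s]
    · simp [r, s, sum_range_succ', bpa_eq_sum_choose_mul_sbpa hℓ]
  simpa [r, s, sum_range_succ'] using binomial_inversion hrs (m + 1)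
end
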